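/- Let n ≥ 6 be an integer and set f₁(n) = log₃(n²), f₂(n) = log₃((n+1)(n+2)/2), and f₃(n) = log₃(2/(1 + 3/n + 2/n²)). Then ⌊f₁(n)⌋ + ⌊−f₂(n)⌋ = ⌊f₃(n)⌋ + β, where β = 0 if n ∈ [a_r, b_r) for some r ∈ ℕ, and β = −1 if n ∈ [b_r, a_{r+1}) for some r ∈ ℕ. -/
import Mathlib


/-- `a r = 3^(r/2)`. -/
noncomputable def a (r : ℕ) : ℝ := (3 : ℝ) ^ ((r : ℝ) / 2)

/-- `b r = (-3 + √(8·3^r + 1))/2`. -/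
noncomputable def b (r : ℕ) : ℝ := (-3 + Real.sqrt (8 * 3 ^ r + 1)) / 2

/-- `f₁ x = log₃ (x²)`. -/
noncomputable def f₁ (x : ℝ) : ℝ := Real.logb 3 (x ^ 2)

/-- `f₂ x = log₃ ((x+1)(x+2)/2)`. -/
noncomputable def f₂ (x : ℝ) : ℝ := Real.logb 3 ((x + 1) * (x + 2) / 2)

/-- `f₃ x = log₃ (2/(1 + 3/x + 2/x²))`. -/
noncomputable def f₃ (x : ℝ) : ℝ := Real.logb 3 (2 / (1 + 3 / x + 2 / x ^ 2))

lemma floor_logb3 {y : ℝ} {k : ℤ} (h1 : (3:ℝ) ^ k ≤ y) (h2 : y < (3:ℝ) ^ (k + 1)) :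
    ⌊Real.logb 3 y⌋ = k := by
  have hy : 0 < y := lt_of_lt_of_le (zpow_pos (by norm_num) k) h1
  rw [Int.floor_eq_iff]
  constructor
  · rw [Real.le_logb_iff_rpow_le (by norm_num) hy, Real.rpow_intCast]
    exact h1
  · rw [Real.logb_lt_iff_lt_rpow (by norm_num) hy]
    have : ((k : ℝ) + 1) = ((k + 1 : ℤ) : ℝ) := by push_cast; ring
    rw [this, Real.rpow_intCast]
    exact h2

/-- `(n+1)(n+2)` is never `2·3^r` for `n ≥ 6`. -/
lemma key_ne (n r : ℕ) (hn : 6 ≤ n) : (n + 1) * (n + 2) ≠ 2 * 3 ^ r := by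
  intro h
  have h3 : (3:ℕ) ^ r ∣ (n + 1) * (n + 2) := ⟨2, by omega⟩
  have hp : Prime (3:ℕ) := Nat.prime_iff.mp (by norm_num)
  rcases Nat.eq_zero_or_pos r with hr | hr
  · subst hr; simp at h; nlinarith
  by_cases hd : (3:ℕ) ∣ (n + 1)
  · -- 3 ∤ n+2, so 3^r ∣ n+1
    have hnd : ¬ (3:ℕ) ∣ (n + 2) := by omega
    have : (3:ℕ) ^ r ∣ (n + 1) := hp.pow_dvd_of_dvd_mul_right r hnd h3
    have hle : (3:ℕ) ^ r ≤ n + 1 := Nat.le_of_dvd (by omega) this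
    nlinarith
  · -- 3^r ∣ n+2
    have : (3:ℕ) ^ r ∣ (n + 2) := hp.pow_dvd_of_dvd_mul_left r hd h3
    have hle : (3:ℕ) ^ r ≤ n + 2 := Nat.le_of_dvd (by omega) this
    nlinarith

lemma hhalf (s : ℕ) : ((3:ℝ) ^ ((s:ℝ) / 2)) ^ 2 = (3:ℝ) ^ s := by
  rw [← Real.rpow_natCast ((3:ℝ) ^ ((s:ℝ)/2)) 2, ← Real.rpow_mul (by norm_num),
    ← Real.rpow_natCast 3 s]
  congr 1
  push_cast
  ring

theorem stmt_5 (n : ℕ) (hn : 6 ≤ n) :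
    (∀ r : ℕ, 1 ≤ r → a r ≤ (n : ℝ) → (n : ℝ) < b r →
      ⌊f₁ n⌋ + ⌊-f₂ n⌋ = ⌊f₃ n⌋ + 0) ∧
    (∀ r : ℕ, 1 ≤ r → b r ≤ (n : ℝ) → (n : ℝ) < a (r + 1) →
      ⌊f₁ n⌋ + ⌊-f₂ n⌋ = ⌊f₃ n⌋ + (-1)) := by
  have hn6 : (6:ℝ) ≤ (n:ℝ) := by exact_mod_cast hn
  have hnpos : (0:ℝ) < n := by linarith
  -- floor of f₃ is always 0
  have hf3 : ⌊f₃ n⌋ = 0 := by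
    have hA : (2 : ℝ) / (1 + 3 / (n:ℝ) + 2 / (n:ℝ) ^ 2)
        = 2 * (n:ℝ) ^ 2 / (((n:ℝ) + 1) * ((n:ℝ) + 2)) := by
      field_simp
      ring
    have hden : (0:ℝ) < ((n:ℝ) + 1) * ((n:ℝ) + 2) := by positivity
    have h1 : (3:ℝ) ^ (0:ℤ) ≤ 2 / (1 + 3 / (n:ℝ) + 2 / (n:ℝ) ^ 2) := by
      rw [hA, zpow_zero, le_div_iff₀ hden]
      nlinarith
    have h2 : 2 / (1 + 3 / (n:ℝ) + 2 / (n:ℝ) ^ 2) < (3:ℝ) ^ ((0:ℤ) + 1) := by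
      rw [hA, div_lt_iff₀ hden]
      norm_num
      nlinarith
    exact floor_logb3 h1 h2
  constructor
  · intro r hr ha hb
    unfold a at ha
    have h3r : ((3:ℝ) ^ (r:ℤ)) = (3:ℝ) ^ r := zpow_natCast 3 r
    have h3r1 : ((3:ℝ) ^ ((r:ℤ) + 1)) = 3 * (3:ℝ) ^ r := by
      rw [zpow_add_one₀ (by norm_num), h3r]; ring
    -- from a r ≤ n : 3^r ≤ n^2
    have h1 : (3:ℝ) ^ r ≤ (n:ℝ) ^ 2 := by
      have hsq : ((3:ℝ) ^ ((r:ℝ)/2)) ^ 2 ≤ (n:ℝ) ^ 2 := by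
        apply pow_le_pow_left₀ (by positivity) ha
      rwa [hhalf r] at hsq
    -- from n < b r : (n+1)(n+2) < 2·3^r
    have h2 : ((n:ℝ) + 1) * ((n:ℝ) + 2) < 2 * (3:ℝ) ^ r := by
      unfold b at hb
      have hlt : 2 * (n:ℝ) + 3 < Real.sqrt (8 * 3 ^ r + 1) := by linarith
      have := (Real.lt_sqrt (by positivity)).mp hlt
      nlinarith
    have h3pow : (0:ℝ) < (3:ℝ) ^ r := by positivity
    -- floor f₁ = r
    have hf1 : ⌊f₁ (n:ℝ)⌋ = (r:ℤ) := by
      apply floor_logb3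
      · rw [h3r]; exact h1
      · rw [h3r1]; nlinarith
    -- floor (-f₂) = -r : we need 3^(r-1) < (n+1)(n+2)/2 < 3^r
    have hf2 : ⌊-f₂ (n:ℝ)⌋ = -(r:ℤ) := by
      have harg : (0:ℝ) < ((n:ℝ) + 1) * ((n:ℝ) + 2) / 2 := by positivity
      have hlow : ((r:ℝ) - 1) < Real.logb 3 (((n:ℝ) + 1) * ((n:ℝ) + 2) / 2) := by
        rw [Real.lt_logb_iff_rpow_lt (by norm_num) harg]
        have he : (3:ℝ) ^ ((r:ℝ) - 1) = (3:ℝ) ^ r / 3 := by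
          rw [Real.rpow_sub (by norm_num), Real.rpow_one, Real.rpow_natCast]
        rw [he, div_lt_iff₀ (by norm_num)]
        nlinarith
      have hhigh : Real.logb 3 (((n:ℝ) + 1) * ((n:ℝ) + 2) / 2) < (r:ℝ) := by
        rw [Real.logb_lt_iff_lt_rpow (by norm_num) harg, Real.rpow_natCast]
        linarith
      rw [Int.floor_eq_iff]
      unfold f₂
      constructor
      · push_cast; linarith
      · push_cast; linarith
    unfold f₁ f₂ f₃ at *
    rw [hf1, hf2, hf3]
    ring
  · intro r hr hb ha
    unfold a at ha
    have h3r : ((3:ℝ) ^ (r:ℤ)) = (3:ℝ) ^ r := zpow_natCast 3 r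
    have h3r1 : ((3:ℝ) ^ ((r:ℤ) + 1)) = 3 * (3:ℝ) ^ r := by
      rw [zpow_add_one₀ (by norm_num), h3r]; ring
    have h3pow : (0:ℝ) < (3:ℝ) ^ r := by positivity
    -- from b r ≤ n : 2·3^r < (n+1)(n+2) (strict by key_ne)
    have h2 : 2 * (3:ℝ) ^ r < ((n:ℝ) + 1) * ((n:ℝ) + 2) := by
      unfold b at hb
      have hle : Real.sqrt (8 * 3 ^ r + 1) ≤ 2 * (n:ℝ) + 3 := by linarith
      have hsq : (8:ℝ) * 3 ^ r + 1 ≤ (2 * (n:ℝ) + 3) ^ 2 := by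
        nlinarith [Real.sq_sqrt (show (0:ℝ) ≤ 8 * 3 ^ r + 1 by positivity),
          Real.sqrt_nonneg ((8:ℝ) * 3 ^ r + 1)]
      have hle2 : 2 * (3:ℝ) ^ r ≤ ((n:ℝ) + 1) * ((n:ℝ) + 2) := by nlinarith
      rcases lt_or_eq_of_le hle2 with h | h
      · exact h
      · exfalso
        apply key_ne n r hn
        exact_mod_cast h.symm
    -- from n < a (r+1) : n^2 < 3^(r+1)
    have h1 : (n:ℝ) ^ 2 < 3 * (3:ℝ) ^ r := by
      have hsq : (n:ℝ) ^ 2 < (3:ℝ) ^ (r + 1) := by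
        calc (n:ℝ) ^ 2 < ((3:ℝ) ^ (((r + 1 : ℕ):ℝ) / 2)) ^ 2 := by
              apply pow_lt_pow_left₀ ha (le_of_lt hnpos) (by norm_num)
          _ = (3:ℝ) ^ (r + 1) := hhalf (r + 1)
      have he : (3:ℝ) ^ (r + 1) = 3 * 3 ^ r := by ring
      linarith
    -- floor f₁ = r : 3^r ≤ n^2 < 3^(r+1)
    have hf1 : ⌊f₁ (n:ℝ)⌋ = (r:ℤ) := by
      apply floor_logb3
      · rw [h3r]; nlinarith
      · rw [h3r1]; exact h1
    -- floor (-f₂) = -(r+1): r < f₂ < r+1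
    have hf2 : ⌊-f₂ (n:ℝ)⌋ = -((r:ℤ) + 1) := by
      have harg : (0:ℝ) < ((n:ℝ) + 1) * ((n:ℝ) + 2) / 2 := by positivity
      have hlow : ((r:ℝ)) < Real.logb 3 (((n:ℝ) + 1) * ((n:ℝ) + 2) / 2) := by
        rw [Real.lt_logb_iff_rpow_lt (by norm_num) harg, Real.rpow_natCast]
        linarith
      have hhigh : Real.logb 3 (((n:ℝ) + 1) * ((n:ℝ) + 2) / 2) < (r:ℝ) + 1 := by
        rw [Real.logb_lt_iff_lt_rpow (by norm_num) harg]
        have he : (3:ℝ) ^ ((r:ℝ) + 1) = 3 * (3:ℝ) ^ r := by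
          rw [Real.rpow_add (by norm_num), Real.rpow_one, Real.rpow_natCast]; ring
        rw [he]
        nlinarith
      rw [Int.floor_eq_iff]
      unfold f₂
      constructor
      · push_cast; linarith
      · push_cast; linarith
    unfold f₁ f₂ f₃ at *
    rw [hf1, hf2, hf3]
    ring
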